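/- Every indecomposable finitely generated Gorenstein-projective Z[ε]-module is isomorphic to one given by an embedding (I ⊆ Z) for some ideal I of Z, and every finitely generated Gorenstein-projective Z[ε]-module is a direct sum of such indecomposables. -/

import Mathlib

/-- The differential of the Gorenstein-projective `ℤ[ε]`-module associated with a
subgroup embedding `A ⊆ B`: on the underlying group `A × B`, `ε · (a, b) = (0, a)`. -/
def eEmb {B : Type*} [AddCommGroup B] [Module ℤ B] (A : Submodule ℤ B) :
    (A × B) →ₗ[ℤ] (A × B) where
  toFun x := (0, (x.1 : B))
  map_add' x y := by simp [Prod.ext_iff]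
  map_smul' c x := by simp [Prod.ext_iff]

/-- Indecomposability of a differential structure `(N, e)` (a `ℤ[ε]`-module):
`N` is nonzero and any isomorphism onto a direct sum of differential structures has a
vanishing summand. -/
def DiffIndec (N : Type*) [AddCommGroup N] [Module ℤ N] (e : N →ₗ[ℤ] N) : Prop :=
  (¬ Subsingleton N) ∧
  ∀ (N₁ N₂ : Type) [AddCommGroup N₁] [AddCommGroup N₂] [Module ℤ N₁] [Module ℤ N₂]
    (e₁ : N₁ →ₗ[ℤ] N₁) (e₂ : N₂ →ₗ[ℤ] N₂) (φ : N ≃ₗ[ℤ] N₁ × N₂),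
    (∀ x, φ (e x) = (e₁ (φ x).1, e₂ (φ x).2)) → Subsingleton N₁ ∨ Subsingleton N₂

/-!
Choose a Smith normal form for `A ⊆ B`: a basis `(b_i)` of `B` such that `A` is spanned by
multiples `a_j b_{f j}` of basis vectors. Then `A` is the direct sum of its coordinate images
`I_i = coord_i(A) ⊆ ℤ`, and the coordinates identify `(A ⊆ B)` with `⨁ (I_i ⊆ ℤ)`, compatibly
with `ε`. Each summand `I_i × ℤ` is nonzero, so an indecomposable module has exactly one summand.
-/

namespace Module.Basis

variable {R M ι : Type*} [CommRing R] [AddCommGroup M] [Module R M]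

theorem SmithNormalForm.coord_smul_mem {n : ℕ} {N : Submodule R M}
    (snf : SmithNormalForm N ι n) {y : M} (hy : y ∈ N) (i : ι) :
    snf.bM.coord i y • snf.bM i ∈ N := by
  by_cases hi : i ∈ Set.range snf.f
  · obtain ⟨j, rfl⟩ := hi
    have hcoord : snf.bM.coord (snf.f j) y = snf.a j * snf.bN.coord j ⟨y, hy⟩ :=
      LinearMap.congr_fun snf.coord_apply_embedding_eq_smul_coord ⟨y, hy⟩
    rw [hcoord, mul_comm, mul_smul, ← snf.snf]
    exact N.smul_mem _ (snf.bN j).2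
  · rw [snf.le_ker_coord_of_notMem_range hi hy, zero_smul]
    exact N.zero_mem

variable [Fintype ι]

theorem bijective_pi_coord_submoduleMap (b : Basis ι R M) {A : Submodule R M}
    (hA : ∀ y ∈ A, ∀ i, b.coord i y • b i ∈ A) :
    Function.Bijective (LinearMap.pi fun i => (b.coord i).submoduleMap A) := by
  refine ⟨fun x y hxy => ?_, fun c => ?_⟩
  · refine Subtype.ext (b.ext_elem fun i => ?_)
    simpa using congrArg (fun c => (c i : R)) hxy
  · choose w hwA hw using fun i => Submodule.mem_map.mp (c i).2
    have hmem : b.equivFun.symm (fun i => b.coord i (w i)) ∈ A := by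
      rw [b.equivFun_symm_apply]
      exact A.sum_mem fun i _ => hA _ (hwA i) i
    refine ⟨⟨_, hmem⟩, funext fun i => Subtype.ext ?_⟩
    exact (b.coord_equivFun_symm i _).trans (hw i)

theorem SmithNormalForm.exists_equiv_pi_eEmb_map_coord {B : Type*} [AddCommGroup B] [Module ℤ B]
    {A : Submodule ℤ B} {n : ℕ} (snf : SmithNormalForm A ι n) :
    ∃ φ : (A × B) ≃ₗ[ℤ] ((i : ι) → (A.map (snf.bM.coord i) × ℤ)),
      ∀ x i, φ (eEmb A x) i = eEmb _ (φ x i) := by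
  let Φ : (A × B) →+ ((i : ι) → (A.map (snf.bM.coord i) × ℤ)) :=
    AddMonoidHom.mk' (fun x i => ((snf.bM.coord i).submoduleMap A x.1, snf.bM.coord i x.2))
      fun x y => by ext <;> simp
  have hΦ : Function.Bijective Φ :=
    (Equiv.arrowProdEquivProdArrow _ _ _).symm.bijective.comp
      ((snf.bM.bijective_pi_coord_submoduleMap fun _ => snf.coord_smul_mem).prodMap
        snf.bM.equivFun.bijective)
  -- Over `ℤ`, the module structures on products and submodules found by instance search are
  -- `AddCommGroup.toIntModule`, not defeq to the ones the linear combinators produce, so the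
  -- equivalence is built additively and upgraded with `toIntLinearEquiv`.
  refine ⟨(AddEquiv.ofBijective Φ hΦ).toIntLinearEquiv, fun x i => ?_⟩
  ext <;> simp [Φ, eEmb]

end Module.Basis

theorem DiffIndec.exists_equiv_fst {N : Type*} [AddCommGroup N] [Module ℤ N] {e : N →ₗ[ℤ] N}
    (hN : DiffIndec N e) {N₁ N₂ : Type} [AddCommGroup N₁] [AddCommGroup N₂] [Module ℤ N₁]
    [Module ℤ N₂] [Nontrivial N₁] {e₁ : N₁ →ₗ[ℤ] N₁} {e₂ : N₂ →ₗ[ℤ] N₂} (φ : N ≃ₗ[ℤ] N₁ × N₂)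
    (hφ : ∀ x, φ (e x) = (e₁ (φ x).1, e₂ (φ x).2)) :
    ∃ ψ : N ≃ₗ[ℤ] N₁, ∀ x, ψ (e x) = e₁ (ψ x) := by
  have : Subsingleton N₂ := (hN.2 N₁ N₂ e₁ e₂ φ hφ).resolve_left (not_subsingleton N₁)
  have : Unique N₂ := uniqueOfSubsingleton 0
  exact ⟨(φ.toAddEquiv.trans AddEquiv.prodUnique).toIntLinearEquiv, fun x => by simp [hφ]⟩

theorem DiffIndec.exists_equiv_of_equiv_pi {N : Type*} [AddCommGroup N] [Module ℤ N]
    {e : N →ₗ[ℤ] N} (hN : DiffIndec N e) {k : ℕ} {M : Fin k → Type} [∀ i, AddCommGroup (M i)]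
    [∀ i, Module ℤ (M i)] [∀ i, Nontrivial (M i)] {eM : ∀ i, M i →ₗ[ℤ] M i}
    (φ : N ≃ₗ[ℤ] ((i : Fin k) → M i)) (hφ : ∀ x i, φ (e x) i = eM i (φ x i)) :
    ∃ i, ∃ ψ : N ≃ₗ[ℤ] M i, ∀ x, ψ (e x) = eM i (ψ x) := by
  cases k with
  | zero => exact absurd φ.toEquiv.subsingleton hN.1
  | succ k =>
    let split : ((i : Fin (k + 1)) → M i) ≃+ M 0 × ((i : Fin k) → M i.succ) :=
      { (Fin.consEquiv M).symm with map_add' := fun _ _ => rfl }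
    refine ⟨0, hN.exists_equiv_fst
      (e₂ := (LinearMap.piMap fun i : Fin k => eM i.succ).toAddMonoidHom.toIntLinearMap)
      (φ.toAddEquiv.trans split).toIntLinearEquiv fun x => ?_⟩
    ext <;> exact hφ x _

theorem exists_equiv_pi_eEmb (B : Type*) [AddCommGroup B] [Module ℤ B] [Module.Free ℤ B]
    [Module.Finite ℤ B] (A : Submodule ℤ B) :
    ∃ (k : ℕ) (I : Fin k → Submodule ℤ ℤ) (φ : (A × B) ≃ₗ[ℤ] ((i : Fin k) → ((I i) × ℤ))),
      ∀ x (i : Fin k), φ (eEmb A x) i = eEmb (I i) (φ x i) := by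
  obtain ⟨n, snf⟩ := A.smithNormalForm (Module.finBasis ℤ B)
  obtain ⟨φ, hφ⟩ := snf.exists_equiv_pi_eEmb_map_coord
  exact ⟨_, _, φ, hφ⟩

theorem stmt8 :
    (∀ (B : Type) [AddCommGroup B] [Module ℤ B] [Module.Free ℤ B] [Module.Finite ℤ B]
      (A : Submodule ℤ B),
      ∃ (k : ℕ) (I : Fin k → Submodule ℤ ℤ)
        (φ : (A × B) ≃ₗ[ℤ] ((i : Fin k) → ((I i) × ℤ))),
        ∀ x (i : Fin k), φ (eEmb A x) i = eEmb (I i) (φ x i)) ∧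
    (∀ (B : Type) [AddCommGroup B] [Module ℤ B] [Module.Free ℤ B] [Module.Finite ℤ B]
      (A : Submodule ℤ B), DiffIndec (A × B) (eEmb A) →
      ∃ (I : Submodule ℤ ℤ) (φ : (A × B) ≃ₗ[ℤ] (I × ℤ)),
        ∀ x, φ (eEmb A x) = eEmb I (φ x)) := by
  refine ⟨exists_equiv_pi_eEmb, fun B _ _ _ _ A hA => ?_⟩
  obtain ⟨k, I, φ, hφ⟩ := exists_equiv_pi_eEmb B A
  obtain ⟨i, ψ, hψ⟩ := hA.exists_equiv_of_equiv_pi φ hφ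
  exact ⟨I i, ψ, hψ⟩
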